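/- Let d ≥ 1, let ϑ : ℝ^d → ℂ be a Schwartz function, and let v ∈ ℝ^d. Then for every t > 0 and x ∈ ℝ^d, the wavepacket Ψ_v satisfies i ∂_t Ψ_v(t,x) + Δ_x Ψ_v(t,x) = e^{i|x|²/(4t)} [ i ((x − 2vt)/(2 t^{3/2})) · (∇ϑ)((x − 2tv)/t^{1/2}) + (i d/(2t)) ϑ((x − 2tv)/t^{1/2}) + (1/t) (Δϑ)((x − 2tv)/t^{1/2}) ]; in particular Ψ_v solves the linear Schrödinger equation up to an error which is a factor 1/t smaller than the wavepacket itself. -/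

import Mathlib

open MeasureTheory

/-- The wavepacket with velocity `v`: `Ψ_v(t,x) = e^{i|x|²/(4t)} ϑ((x − 2tv)/t^{1/2})`. -/
noncomputable def wavePacket {d : ℕ} (ϑ : SchwartzMap (EuclideanSpace ℝ (Fin d)) ℂ)
    (v : EuclideanSpace ℝ (Fin d)) (t : ℝ) (x : EuclideanSpace ℝ (Fin d)) : ℂ :=
  Complex.exp (Complex.I * ((‖x‖ ^ 2 / (4 * t) : ℝ) : ℂ)) *
    ϑ ((Real.sqrt t)⁻¹ • (x - (2 * t) • v))

/-- The `j`-th partial derivative of a complex-valued function on `ℝ^d`. -/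
noncomputable def pderiv' {d : ℕ} (f : EuclideanSpace ℝ (Fin d) → ℂ)
    (j : Fin d) (x : EuclideanSpace ℝ (Fin d)) : ℂ :=
  fderiv ℝ f x (EuclideanSpace.single j 1)

/-- The Laplacian of a complex-valued function on `ℝ^d`. -/
noncomputable def lap' {d : ℕ} (f : EuclideanSpace ℝ (Fin d) → ℂ)
    (x : EuclideanSpace ℝ (Fin d)) : ℂ :=
  ∑ j : Fin d, pderiv' (pderiv' f j) j x

/-!
Write `Ψ_v(t) = G_t · (ϑ ∘ A_t)` with the Gaussian phase `G_t x = exp (i‖x‖²/(4t))` and the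
affine map `A_t x = t^{-1/2} (x - 2tv)`. The product rule for the Laplacian gives
`ΔΨ = ΔG · ϑ∘A + 2 ∇G · ∇(ϑ∘A) + G · Δ(ϑ∘A)`, where `∇G = (ix/(2t)) G` and
`ΔG = (id/(2t) - ‖x‖²/(4t²)) G`. The term `-‖x‖²/(4t²)` is exactly cancelled by `i ∂_t` of the
phase. What survives is `id/(2t) ϑ`, `t⁻¹ Δϑ` (since `∂_j (ϑ ∘ A_t) = t^{-1/2} ∂_jϑ ∘ A_t`), and
the transport terms, in which the velocity `∂_t A_t x = -(x + 2tv)/(2t^{3/2})` and the cross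
term `x/t^{3/2}` combine to `(x - 2tv)/(2t^{3/2})`.
-/

open Complex

variable {d : ℕ}

section PartialDerivatives

variable {f g : EuclideanSpace ℝ (Fin d) → ℂ} {x : EuclideanSpace ℝ (Fin d)}

theorem fderiv_apply_eq_sum_pderiv' (w : EuclideanSpace ℝ (Fin d)) :
    fderiv ℝ f x w = ∑ j, (w j : ℂ) * pderiv' f j x := by
  conv_lhs => rw [← (EuclideanSpace.basisFun (Fin d) ℝ).sum_repr w]
  simp [pderiv', Complex.real_smul]

theorem pderiv'_mul (hf : DifferentiableAt ℝ f x) (hg : DifferentiableAt ℝ g x) (j : Fin d) :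
    pderiv' (fun y => f y * g y) j x = pderiv' f j x * g x + f x * pderiv' g j x := by
  simp only [pderiv', fderiv_fun_mul hf hg, add_apply, smul_apply, smul_eq_mul]
  ring

theorem pderiv'_add (hf : DifferentiableAt ℝ f x) (hg : DifferentiableAt ℝ g x) (j : Fin d) :
    pderiv' (fun y => f y + g y) j x = pderiv' f j x + pderiv' g j x := by
  simp only [pderiv', fderiv_fun_add hf hg, add_apply]

theorem pderiv'_const_mul (c : ℂ) (hf : DifferentiableAt ℝ f x) (j : Fin d) :
    pderiv' (fun y => c * f y) j x = c * pderiv' f j x := by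
  simp only [pderiv', fderiv_const_mul hf, smul_apply, smul_eq_mul]

theorem pderiv'_coord (j k : Fin d) :
    pderiv' (fun y => ((y k : ℝ) : ℂ)) j x = if k = j then 1 else 0 := by
  have h : HasFDerivAt (fun y : EuclideanSpace ℝ (Fin d) => ((y k : ℝ) : ℂ))
      (ofRealCLM.comp (EuclideanSpace.proj k)) x :=
    (ofRealCLM.comp (EuclideanSpace.proj k)).hasFDerivAt
  simp [pderiv', h.fderiv, apply_ite]

theorem differentiable_pderiv' (hf : ContDiff ℝ 2 f) (j : Fin d) :
    Differentiable ℝ (pderiv' f j) :=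
  ((hf.fderiv_right (m := 1) (by norm_num)).clm_apply contDiff_const).differentiable one_ne_zero

theorem pderiv'_comp_smul_sub (c : ℝ) (a : EuclideanSpace ℝ (Fin d))
    (hf : DifferentiableAt ℝ f (c • (x - a))) (j : Fin d) :
    pderiv' (fun y => f (c • (y - a))) j x = c * pderiv' f j (c • (x - a)) := by
  have h : HasFDerivAt (fun y => f (c • (y - a)))
      ((fderiv ℝ f (c • (x - a))).comp (c • ContinuousLinearMap.id ℝ _)) x :=
    hf.hasFDerivAt.comp x (((hasFDerivAt_id x).sub_const a).const_smul c)
  simp [pderiv', h.fderiv, Complex.real_smul]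

theorem lap'_mul (hf : ContDiff ℝ 2 f) (hg : ContDiff ℝ 2 g) :
    lap' (fun y => f y * g y) x
      = lap' f x * g x + 2 * ∑ j, pderiv' f j x * pderiv' g j x + f x * lap' g x := by
  have hf1 := hf.differentiable two_ne_zero
  have hg1 := hg.differentiable two_ne_zero
  have hfg (j : Fin d) : pderiv' (fun y => f y * g y) j
      = fun y => pderiv' f j y * g y + f y * pderiv' g j y :=
    funext fun y => pderiv'_mul (hf1 y) (hg1 y) j
  have hf2 := differentiable_pderiv' hf
  have hg2 := differentiable_pderiv' hg
  have hj (j : Fin d) : pderiv' (pderiv' (fun y => f y * g y) j) j x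
      = pderiv' (pderiv' f j) j x * g x + 2 * (pderiv' f j x * pderiv' g j x)
        + f x * pderiv' (pderiv' g j) j x := by
    rw [hfg, pderiv'_add ((hf2 j x).fun_mul (hg1 x)) ((hf1 x).fun_mul (hg2 j x)),
      pderiv'_mul (hf2 j x) (hg1 x), pderiv'_mul (hf1 x) (hg2 j x)]
    ring
  simp only [lap', hj, Finset.sum_add_distrib, Finset.mul_sum, Finset.sum_mul]

theorem lap'_comp_smul_sub (c : ℝ) (a : EuclideanSpace ℝ (Fin d)) (hf : ContDiff ℝ 2 f) :
    lap' (fun y => f (c • (y - a))) x = c ^ 2 * lap' f (c • (x - a)) := by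
  have hf1 := hf.differentiable two_ne_zero
  have hfc (j : Fin d) : pderiv' (fun y => f (c • (y - a))) j
      = fun y => c * pderiv' f j (c • (y - a)) :=
    funext fun y => pderiv'_comp_smul_sub c a (hf1 _) j
  have hj (j : Fin d) : pderiv' (pderiv' (fun y => f (c • (y - a))) j) j x
      = c ^ 2 * pderiv' (pderiv' f j) j (c • (x - a)) := by
    have hcomp : Differentiable ℝ (fun y => pderiv' f j (c • (y - a))) :=
      (differentiable_pderiv' hf j).comp (by fun_prop)
    rw [hfc, pderiv'_const_mul _ (hcomp x),
      pderiv'_comp_smul_sub c a (differentiable_pderiv' hf j _)]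
    ring
  simp only [lap', hj, Finset.mul_sum]

end PartialDerivatives

section Gaussian

variable (a : ℂ) (x : EuclideanSpace ℝ (Fin d))

theorem contDiff_cexp_mul_norm_sq {n : WithTop ℕ∞} :
    ContDiff ℝ n (fun y : EuclideanSpace ℝ (Fin d) => cexp (a * ‖y‖ ^ 2)) := by
  have h : ContDiff ℝ n (fun y : EuclideanSpace ℝ (Fin d) => ((‖y‖ ^ 2 : ℝ) : ℂ)) :=
    ofRealCLM.contDiff.comp (contDiff_norm_sq ℝ)
  simpa using (contDiff_const.mul h).cexp

theorem pderiv'_cexp_mul_norm_sq (j : Fin d) :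
    pderiv' (fun y => cexp (a * ‖y‖ ^ 2)) j x = 2 * a * x j * cexp (a * ‖x‖ ^ 2) := by
  have h : HasFDerivAt (fun y : EuclideanSpace ℝ (Fin d) => cexp (a * ((‖y‖ ^ 2 : ℝ) : ℂ)))
      (cexp (a * ((‖x‖ ^ 2 : ℝ) : ℂ)) • a • ofRealCLM.comp (2 • innerSL ℝ x)) x :=
    ((ofRealCLM.hasFDerivAt.comp x (hasStrictFDerivAt_norm_sq x).hasFDerivAt).const_mul a).cexp
  push_cast at h
  simp [pderiv', h.fderiv, EuclideanSpace.inner_single_right]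
  ring

theorem lap'_cexp_mul_norm_sq :
    lap' (fun y => cexp (a * ‖y‖ ^ 2)) x
      = (2 * a * d + 4 * a ^ 2 * ‖x‖ ^ 2) * cexp (a * ‖x‖ ^ 2) := by
  have hG := (contDiff_cexp_mul_norm_sq (d := d) a (n := 1)).differentiable one_ne_zero
  have hj (j : Fin d) : pderiv' (pderiv' (fun y => cexp (a * ‖y‖ ^ 2)) j) j x
      = (2 * a + 4 * a ^ 2 * (x j : ℂ) ^ 2) * cexp (a * ‖x‖ ^ 2) := by
    have hcoord : DifferentiableAt ℝ (fun y : EuclideanSpace ℝ (Fin d) => 2 * a * (y j : ℂ)) x := by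
      fun_prop
    rw [funext (pderiv'_cexp_mul_norm_sq a · j), pderiv'_mul hcoord (hG x),
      pderiv'_const_mul _ (by fun_prop), pderiv'_coord, if_pos rfl,
      pderiv'_cexp_mul_norm_sq]
    ring
  have hnorm : ((‖x‖ : ℝ) : ℂ) ^ 2 = ∑ j, (x j : ℂ) ^ 2 := by
    exact_mod_cast EuclideanSpace.real_norm_sq_eq x
  simp only [lap', hj, ← Finset.sum_mul, Finset.sum_add_distrib, ← Finset.mul_sum, hnorm,
    Finset.sum_const, Finset.card_univ, Fintype.card_fin, nsmul_eq_mul]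
  ring

end Gaussian

theorem hasDerivAt_inv_sqrt_smul_sub {E : Type*} [NormedAddCommGroup E] [NormedSpace ℝ E]
    (x v : E) {t : ℝ} (ht : 0 < t) :
    HasDerivAt (fun s => (√s)⁻¹ • (x - (2 * s) • v)) (-(2 * t * √t)⁻¹ • (x + (2 * t) • v)) t := by
  have hinv : HasDerivAt (fun s => (√s)⁻¹) (-(2 * t * √t)⁻¹) t := by
    refine ((Real.hasDerivAt_sqrt ht.ne').fun_inv (Real.sqrt_pos.2 ht).ne').congr_deriv ?_
    rw [Real.sq_sqrt ht.le]
    field_simp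
  have hu : HasDerivAt (fun s => x - (2 * s) • v) (-(2 : ℝ) • v) t := by
    simpa using (((hasDerivAt_id t).const_mul 2).smul_const v).const_sub x
  refine (hinv.smul hu).congr_deriv ?_
  have hv : (√t)⁻¹ * (-2) + (2 * t * √t)⁻¹ * (2 * t) = -(2 * t * √t)⁻¹ * (2 * t) := by
    field_simp
    ring
  linear_combination (norm := module) hv • v

theorem transport_coeff {t : ℝ} (ht : 0 < t) (a b : ℝ) :
    -(2 * t * √t)⁻¹ * (a + 2 * t * b) + a / t * (√t)⁻¹
      = (a - 2 * b * t) / (2 * t ^ ((3 : ℝ) / 2)) := by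
  rw [show (3 : ℝ) / 2 = 1 + 1 / 2 by norm_num, Real.rpow_add ht, Real.rpow_one,
    ← Real.sqrt_eq_rpow]
  field_simp
  ring

theorem hasDerivAt_wavePacket_time (ϑ : SchwartzMap (EuclideanSpace ℝ (Fin d)) ℂ)
    (v x : EuclideanSpace ℝ (Fin d)) {t : ℝ} (ht : 0 < t) :
    HasDerivAt (fun s => wavePacket ϑ v s x)
      (cexp (I * ((‖x‖ ^ 2 / (4 * t) : ℝ) : ℂ)) *
        (-(I * ‖x‖ ^ 2 / (4 * t ^ 2)) * ϑ ((√t)⁻¹ • (x - (2 * t) • v))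
          + fderiv ℝ ϑ ((√t)⁻¹ • (x - (2 * t) • v)) (-(2 * t * √t)⁻¹ • (x + (2 * t) • v)))) t := by
  have hphase : HasDerivAt (fun s => ‖x‖ ^ 2 / (4 * s)) (-(‖x‖ ^ 2 / (4 * t ^ 2))) t := by
    refine ((hasDerivAt_const t _).div ((hasDerivAt_id t).const_mul 4)
      (by positivity)).congr_deriv ?_
    simp only [id]
    field_simp
    ring
  have hϑ := (ϑ.differentiableAt (x := (√t)⁻¹ • (x - (2 * t) • v))).hasFDerivAt.comp_hasDerivAt t
    (hasDerivAt_inv_sqrt_smul_sub x v ht)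
  refine (((hphase.ofReal_comp.const_mul I).cexp).mul hϑ).congr_deriv ?_
  rw [Function.comp_apply]
  push_cast
  ring

theorem stmt0_general (d : ℕ) (ϑ : SchwartzMap (EuclideanSpace ℝ (Fin d)) ℂ)
    (v : EuclideanSpace ℝ (Fin d)) (t : ℝ) (ht : 0 < t) (x : EuclideanSpace ℝ (Fin d)) :
    Complex.I * deriv (fun s => wavePacket ϑ v s x) t + lap' (wavePacket ϑ v t) x
      = Complex.exp (Complex.I * ((‖x‖ ^ 2 / (4 * t) : ℝ) : ℂ)) *
        (Complex.I * ∑ j : Fin d,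
            (((x j - 2 * v j * t) / (2 * t ^ ((3 : ℝ) / 2)) : ℝ) : ℂ) *
              pderiv' (fun y => ϑ y) j ((Real.sqrt t)⁻¹ • (x - (2 * t) • v))
          + Complex.I * (d : ℂ) / (2 * t) * ϑ ((Real.sqrt t)⁻¹ • (x - (2 * t) • v))
          + (1 / (t : ℂ)) * lap' (fun y => ϑ y) ((Real.sqrt t)⁻¹ • (x - (2 * t) • v))) := by
  have hphase (z : EuclideanSpace ℝ (Fin d)) :
      cexp (I * ((‖z‖ ^ 2 / (4 * t) : ℝ) : ℂ)) = cexp (I / (4 * t) * ‖z‖ ^ 2) := by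
    congr 1
    push_cast
    ring
  have hW : wavePacket ϑ v t
      = fun z => cexp (I / (4 * t) * ‖z‖ ^ 2) * ϑ ((√t)⁻¹ • (z - (2 * t) • v)) :=
    funext fun z => by rw [wavePacket, hphase]
  have hϑy : ContDiff ℝ 2 (fun z => ϑ ((√t)⁻¹ • (z - (2 * t) • v))) :=
    (ϑ.smooth 2).comp (by fun_prop)
  rw [(hasDerivAt_wavePacket_time ϑ v x ht).deriv, hW,
    lap'_mul (contDiff_cexp_mul_norm_sq _) hϑy, lap'_cexp_mul_norm_sq,
    lap'_comp_smul_sub _ _ (ϑ.smooth 2), fderiv_apply_eq_sum_pderiv', hphase]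
  simp only [pderiv'_cexp_mul_norm_sq, pderiv'_comp_smul_sub _ _ ϑ.differentiableAt]
  set y := (√t)⁻¹ • (x - (2 * t) • v)
  set G := cexp (I / (4 * t) * ‖x‖ ^ 2)
  have hgrad : I * (G * ∑ j, ((-(2 * t * √t)⁻¹ • (x + (2 * t) • v)) j : ℂ) * pderiv' ϑ j y)
      + 2 * ∑ j, 2 * (I / (4 * t)) * (x j : ℂ) * G * (((√t)⁻¹ : ℝ) * pderiv' ϑ j y)
      = G * (I * ∑ j, (((x j - 2 * v j * t) / (2 * t ^ ((3 : ℝ) / 2)) : ℝ) : ℂ)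
          * pderiv' ϑ j y) := by
    simp only [Finset.mul_sum, ← Finset.sum_add_distrib]
    refine Finset.sum_congr rfl fun j _ => ?_
    rw [← transport_coeff ht]
    simp only [PiLp.smul_apply, PiLp.add_apply, smul_eq_mul]
    push_cast
    ring
  have hc : (((√t)⁻¹ : ℝ) : ℂ) ^ 2 = 1 / t := by
    rw [← ofReal_pow, inv_pow, Real.sq_sqrt ht.le, ofReal_inv, one_div]
  linear_combination hgrad + G * lap' ϑ y * hc

/-- The wavepacket solves the linear Schrödinger equation up to an error a factor
`1/t` smaller than the wavepacket itself. -/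
theorem stmt0 (d : ℕ) (hd : 1 ≤ d) (ϑ : SchwartzMap (EuclideanSpace ℝ (Fin d)) ℂ)
    (v : EuclideanSpace ℝ (Fin d)) (t : ℝ) (ht : 0 < t) (x : EuclideanSpace ℝ (Fin d)) :
    Complex.I * deriv (fun s => wavePacket ϑ v s x) t + lap' (wavePacket ϑ v t) x
      = Complex.exp (Complex.I * ((‖x‖ ^ 2 / (4 * t) : ℝ) : ℂ)) *
        (Complex.I * ∑ j : Fin d,
            (((x j - 2 * v j * t) / (2 * t ^ ((3 : ℝ) / 2)) : ℝ) : ℂ) *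
              pderiv' (fun y => ϑ y) j ((Real.sqrt t)⁻¹ • (x - (2 * t) • v))
          + Complex.I * (d : ℂ) / (2 * t) * ϑ ((Real.sqrt t)⁻¹ • (x - (2 * t) • v))
          + (1 / (t : ℂ)) * lap' (fun y => ϑ y) ((Real.sqrt t)⁻¹ • (x - (2 * t) • v))) :=
  stmt0_general d ϑ v t ht x
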